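/- In the large-deviations construction, if x₀ ≥ log( 3 max{1, σ^{−2}} ) / ( (1−γ)/2 ) and x₀ ≥ 1 + 1/σ, then the Kullback-Leibler divergence satisfies D_KL(P₁ ‖ P₂) ≤ e^{−σ x₀}. -/

import Mathlib

/-!
On `[0, x₀]` the two densities agree, so `dP₁/dP₂` is `1` there and `(c / C) x^(1-η)` beyond `x₀`,
with `c = σ^(1-η) / Γ(1-η)`. On the tail `x^(-η) ≥ x₀^(1-η) x⁻¹`, which gives `C ≥ c x₀^(1-η)`,
hence `log (dP₁/dP₂) ≤ (1-η) log (x/x₀) ≤ (1-η) (x - x₀)/x₀`. Integrating against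
`f₁ ≤ c x₀^(-η) e^(-σx)` and using `∫_{x₀}^∞ (x - x₀) e^(-σx) dx = e^(-σx₀)/σ²` bounds the
divergence by `(1-η) e^(-σx₀) / (Γ(1-η) (σx₀)^(1+η))`, which is at most `e^(-σx₀)` since
`Γ(t) ≥ e⁻¹/t` and `σx₀ ≥ 4 > e`.
-/

open MeasureTheory ProbabilityTheory Real Set
open scoped ENNReal NNReal

noncomputable section

namespace Stab

open Classical in
/-- The Kullback-Leibler divergence `D_KL(Q‖P) = E_Q[log dQ/dP]` when `Q ≪ P` (and the
log-density is integrable), and `+∞` otherwise. -/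
def klDiv (Q P : Measure ℝ) : EReal :=
  if Q ≪ P ∧ Integrable (fun x => Real.log ((Q.rnDeriv P x).toReal)) Q then
    ((∫ x, Real.log ((Q.rnDeriv P x).toReal) ∂Q : ℝ) : EReal)
  else ⊤

/-- The extended-real-valued expectation `E_Q[R]` of the identity `R(x) = x` under `Q`. -/
def erealExp (Q : Measure ℝ) : EReal :=
  ((∫⁻ x, ENNReal.ofReal x ∂Q : ℝ≥0∞) : EReal) - ((∫⁻ x, ENNReal.ofReal (-x) ∂Q : ℝ≥0∞) : EReal)

/-- The stability `I_y(P) = inf { D_KL(Q‖P) : Q a probability measure, E_Q[R] ≥ y }`. -/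
def stability (y : ℝ) (P : Measure ℝ) : EReal :=
  ⨅ Q ∈ {Q : Measure ℝ | IsProbabilityMeasure Q ∧ (y : EReal) ≤ erealExp Q}, klDiv Q P

/-- The exponential moment `E_P[e^{λ R}]`, valued in `ℝ≥0∞`. -/
def expMoment (P : Measure ℝ) (l : ℝ) : ℝ≥0∞ := ∫⁻ x, ENNReal.ofReal (Real.exp (l * x)) ∂P

/-- The dual objective `λ ↦ λ y − log E_P[e^{λ R}]`. -/
def dualObj (y : ℝ) (P : Measure ℝ) (l : ℝ) : EReal :=
  ((l * y : ℝ) : EReal) - ENNReal.log (expMoment P l)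

/-- The dual value `sup_{λ ∈ ℝ} { λ y − log E_P[e^{λ R}] }`. -/
def dualValue (y : ℝ) (P : Measure ℝ) : EReal := ⨆ l : ℝ, dualObj y P l

/-- `EReal → ℝ≥0∞`, sending `⊤` to `⊤` and negative values to `0`. -/
def erealToENNReal (a : EReal) : ℝ≥0∞ := if a = ⊤ then ⊤ else ENNReal.ofReal a.toReal

/-- The absolute difference `|a − b|` of two extended reals, valued in `ℝ≥0∞`. -/
def eAbsDiff (a b : EReal) : ℝ≥0∞ := erealToENNReal (max (a - b) (b - a))

/-- The empirical measure of the sample `x = (x 1, …, x n)`. -/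
def empMeasure {n : ℕ} (x : Fin n → ℝ) : Measure ℝ :=
  (n : ℝ≥0∞)⁻¹ • ∑ i, Measure.dirac (x i)

/-- The class `P_{σ,y,γ}` of distributions with Gamma-like tails. -/
def Pclass (σ y γ : ℝ) : Set (Measure ℝ) :=
  {P | IsProbabilityMeasure P ∧ (∀ᵐ x ∂P, 0 ≤ x) ∧ expMoment P σ = ⊤ ∧
    (∀ l : ℝ, 0 ≤ l → l < σ → expMoment P l ≤ ENNReal.ofReal (σ / (σ - l))) ∧
    (∫⁻ x, ENNReal.ofReal x ∂P) ≤ ENNReal.ofReal (1 / σ) ∧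
    ∃ l : ℝ, IsMaxOn (dualObj y P) Set.univ l ∧ l ≤ σ - γ / y}

/-- The normalizing constant `C` in the large-deviations construction. -/
def ldC (σ η x₀ : ℝ) : ℝ :=
  σ ^ (1 - η) / Real.Gamma (1 - η) * (∫ x in Set.Ioi x₀, x ^ (-η) * Real.exp (-σ * x)) /
    ∫ x in Set.Ioi x₀, x⁻¹ * Real.exp (-σ * x)

/-- `P₁ = Gamma(1 − η, σ)` in the large-deviations construction. -/
def ldP1 (σ η : ℝ) : Measure ℝ := gammaMeasure (1 - η) σ

/-- `P₂` in the large-deviations construction. -/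
def ldP2 (σ η x₀ : ℝ) : Measure ℝ :=
  volume.withDensity fun x =>
    if x < 0 then 0
    else if x ≤ x₀ then
      ENNReal.ofReal (σ ^ (1 - η) / Real.Gamma (1 - η) * x ^ (-η) * Real.exp (-σ * x))
    else ENNReal.ofReal (ldC σ η x₀ * x⁻¹ * Real.exp (-σ * x))

lemma exp_neg_one_div_le_Gamma {t : ℝ} (ht : 0 < t) : exp (-1) / t ≤ Gamma t := by
  have hint : IntegrableOn (fun x : ℝ => exp (-x) * x ^ (t - 1)) (Ioi 0) :=
    GammaIntegral_convergent ht
  calc exp (-1) / t = ∫ x in Ioc (0 : ℝ) 1, exp (-1) * x ^ (t - 1) := by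
        rw [← intervalIntegral.integral_of_le zero_le_one, intervalIntegral.integral_const_mul,
          integral_rpow (Or.inl (by linarith)), sub_add_cancel, zero_rpow ht.ne', one_rpow]
        ring
    _ ≤ ∫ x in Ioc (0 : ℝ) 1, exp (-x) * x ^ (t - 1) := by
        refine setIntegral_mono_on ?_ (hint.mono_set Ioc_subset_Ioi_self) measurableSet_Ioc
          fun x hx => ?_
        · exact ((intervalIntegrable_iff_integrableOn_Ioc_of_le zero_le_one).mp
            (intervalIntegral.intervalIntegrable_rpow' (by linarith))).const_mul _
        · exact mul_le_mul_of_nonneg_right (exp_le_exp.mpr (neg_le_neg hx.2))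
            (rpow_nonneg hx.1.le _)
    _ ≤ ∫ x in Ioi (0 : ℝ), exp (-x) * x ^ (t - 1) :=
        setIntegral_mono_set hint
          (ae_restrict_of_forall_mem measurableSet_Ioi fun x hx =>
            (mul_pos (exp_pos _) (rpow_pos_of_pos hx _)).le)
          Ioc_subset_Ioi_self.eventuallyLE
    _ = Gamma t := (Gamma_eq_integral ht).symm

lemma le_Gamma_mul_rpow {t s p : ℝ} (ht0 : 0 < t) (ht1 : t ≤ 1) (hs : exp 1 ≤ s) (hp : 1 ≤ p) :
    t ≤ Gamma t * s ^ p := by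
  have hs1 : 1 ≤ s := (one_le_exp zero_le_one).trans hs
  calc t ≤ exp (-1) / t * exp 1 := by
        rw [div_mul_eq_mul_div, ← exp_add, neg_add_cancel, exp_zero, le_div_iff₀ ht0]
        nlinarith
    _ ≤ Gamma t * s := mul_le_mul (exp_neg_one_div_le_Gamma ht0) hs (exp_pos _).le
        (Gamma_pos_of_pos ht0).le
    _ ≤ Gamma t * s ^ p :=
        mul_le_mul_of_nonneg_left (self_le_rpow_of_one_le hs1 hp) (Gamma_pos_of_pos ht0).le

lemma setIntegral_Ioi_pos {f : ℝ → ℝ} {a : ℝ} (hf : IntegrableOn f (Ioi a))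
    (hpos : ∀ x ∈ Ioi a, 0 < f x) : 0 < ∫ x in Ioi a, f x := by
  refine (setIntegral_pos_iff_support_of_nonneg_ae
    (ae_restrict_of_forall_mem measurableSet_Ioi fun x hx => (hpos x hx).le) hf).mpr ?_
  have hsub : Ioi a ⊆ Function.support f ∩ Ioi a := fun x hx => ⟨(hpos x hx).ne', hx⟩
  exact (measure_mono hsub).trans_lt' (by simp)

lemma integrableOn_rpow_mul_exp_neg_Ioi {a s σ : ℝ} (ha : 0 < a) (hs : s ≤ 0) (hσ : 0 < σ) :
    IntegrableOn (fun x => x ^ s * exp (-σ * x)) (Ioi a) := by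
  refine ((exp_neg_integrableOn_Ioi a hσ).const_mul (a ^ s)).mono' (by fun_prop)
    (ae_restrict_of_forall_mem measurableSet_Ioi fun x hx => ?_)
  rw [norm_of_nonneg (by have : 0 < x := ha.trans hx; positivity)]
  exact mul_le_mul_of_nonneg_right (rpow_le_rpow_of_nonpos ha (le_of_lt hx) hs) (exp_pos _).le

section SubMulExpNeg

variable (a : ℝ) {σ : ℝ} (hσ : 0 < σ)
include hσ

lemma hasDerivAt_antideriv_sub_mul_exp_neg (x : ℝ) :
    HasDerivAt (fun y => -((y - a) / σ + 1 / σ ^ 2) * exp (-σ * y))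
      ((x - a) * exp (-σ * x)) x := by
  have hpoly : HasDerivAt (fun y => -((y - a) / σ + 1 / σ ^ 2)) (-(1 / σ)) x :=
    (((hasDerivAt_id x).sub_const a).div_const σ).add_const (1 / σ ^ 2) |>.neg
  have hexp : HasDerivAt (fun y => exp (-σ * y)) (exp (-σ * x) * (-σ)) x := by
    simpa using ((hasDerivAt_id x).const_mul (-σ)).exp
  exact (hpoly.mul hexp).congr_deriv (by field_simp; ring)

lemma tendsto_antideriv_sub_mul_exp_neg :
    Filter.Tendsto (fun x => -((x - a) / σ + 1 / σ ^ 2) * exp (-σ * x)) Filter.atTop (nhds 0) := by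
  have hσx : Filter.Tendsto (fun x : ℝ => σ * x) Filter.atTop Filter.atTop :=
    Filter.tendsto_id.const_mul_atTop hσ
  have h := (((tendsto_pow_mul_exp_neg_atTop_nhds_zero 1).comp hσx).const_mul (-(1 / σ ^ 2))).add
    ((tendsto_exp_neg_atTop_nhds_zero.comp hσx).const_mul (a / σ - 1 / σ ^ 2))
  rw [mul_zero, mul_zero, add_zero] at h
  refine h.congr fun x => ?_
  simp only [Function.comp_apply, pow_one, neg_mul σ x]
  field_simp
  ring

lemma integrableOn_sub_mul_exp_neg_Ioi :
    IntegrableOn (fun x => (x - a) * exp (-σ * x)) (Ioi a) :=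
  integrableOn_Ioi_deriv_of_nonneg' (fun x _ => hasDerivAt_antideriv_sub_mul_exp_neg a hσ x)
    (fun _ hx => mul_nonneg (sub_nonneg.mpr (le_of_lt hx)) (exp_pos _).le)
    (tendsto_antideriv_sub_mul_exp_neg a hσ)

lemma integral_sub_mul_exp_neg_Ioi :
    ∫ x in Ioi a, (x - a) * exp (-σ * x) = exp (-σ * a) / σ ^ 2 := by
  rw [integral_Ioi_of_hasDerivAt_of_nonneg' (fun x _ => hasDerivAt_antideriv_sub_mul_exp_neg a hσ x)
    (fun _ hx => mul_nonneg (sub_nonneg.mpr (le_of_lt hx)) (exp_pos _).le)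
    (tendsto_antideriv_sub_mul_exp_neg a hσ)]
  field_simp
  ring

end SubMulExpNeg

lemma klDiv_withDensity_ofReal {P : Measure ℝ} [SigmaFinite P] {r : ℝ → ℝ} (hr : Measurable r)
    (hr0 : ∀ x, 0 ≤ r x)
    (hint : Integrable (fun x => log (r x)) (P.withDensity fun x => ENNReal.ofReal (r x))) :
    klDiv (P.withDensity fun x => ENNReal.ofReal (r x)) P =
      ((∫ x, log (r x) ∂P.withDensity fun x => ENNReal.ofReal (r x) : ℝ) : EReal) := by
  have hQP : P.withDensity (fun x => ENNReal.ofReal (r x)) ≪ P :=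
    withDensity_absolutelyContinuous _ _
  have hlog : (fun x => log ((P.withDensity fun x => ENNReal.ofReal (r x)).rnDeriv P x).toReal)
      =ᵐ[P.withDensity fun x => ENNReal.ofReal (r x)] fun x => log (r x) := by
    filter_upwards [hQP.ae_le (Measure.rnDeriv_withDensity P hr.ennreal_ofReal)] with x hx
    rw [hx, ENNReal.toReal_ofReal (hr0 x)]
  rw [klDiv, if_pos ⟨hQP, hint.congr hlog.symm⟩, integral_congr_ae hlog]

lemma measurable_gammaPDF (a r : ℝ) : Measurable (gammaPDF a r) :=
  (measurable_gammaPDFReal a r).ennreal_ofReal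

section GammaMeasure

variable {a r : ℝ} (ha : 0 < a) (hr : 0 < r)
include ha hr

lemma toReal_gammaPDF (x : ℝ) : (gammaPDF a r x).toReal = gammaPDFReal a r x :=
  ENNReal.toReal_ofReal (gammaPDFReal_nonneg ha hr x)

lemma integrable_gammaMeasure_iff {g : ℝ → ℝ} :
    Integrable g (gammaMeasure a r) ↔ Integrable fun x => gammaPDFReal a r x * g x := by
  rw [gammaMeasure, integrable_withDensity_iff_integrable_smul'
    (measurable_gammaPDF a r) (ae_of_all _ fun _ => ENNReal.ofReal_lt_top)]
  simp only [toReal_gammaPDF ha hr, smul_eq_mul]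

lemma integral_gammaMeasure (g : ℝ → ℝ) :
    ∫ x, g x ∂gammaMeasure a r = ∫ x, gammaPDFReal a r x * g x := by
  rw [gammaMeasure, integral_withDensity_eq_integral_toReal_smul
    (measurable_gammaPDF a r) (ae_of_all _ fun _ => ENNReal.ofReal_lt_top)]
  simp only [toReal_gammaPDF ha hr, smul_eq_mul]

lemma integrable_gammaPDFReal : Integrable (gammaPDFReal a r) := by
  have := isProbabilityMeasure_gammaMeasure ha hr
  simpa using (integrable_gammaMeasure_iff ha hr).mp (integrable_const (1 : ℝ))

end GammaMeasure

section Construction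

variable {σ η x₀ : ℝ}

lemma integrableOn_inv_mul_exp_neg_Ioi (hσ : 0 < σ) (hx₀ : 0 < x₀) :
    IntegrableOn (fun x => x⁻¹ * exp (-σ * x)) (Ioi x₀) :=
  (integrableOn_rpow_mul_exp_neg_Ioi hx₀ (by norm_num : (-1 : ℝ) ≤ 0) hσ).congr_fun
    (fun x _ => by simp only [rpow_neg_one]) measurableSet_Ioi

lemma rpow_mul_integral_inv_le (hσ : 0 < σ) (hη0 : 0 ≤ η) (hη1 : η ≤ 1) (hx₀ : 0 < x₀) :
    x₀ ^ (1 - η) * ∫ x in Ioi x₀, x⁻¹ * exp (-σ * x) ≤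
      ∫ x in Ioi x₀, x ^ (-η) * exp (-σ * x) := by
  rw [← integral_const_mul]
  refine setIntegral_mono_on ((integrableOn_inv_mul_exp_neg_Ioi hσ hx₀).const_mul _)
    (integrableOn_rpow_mul_exp_neg_Ioi hx₀ (neg_nonpos.mpr hη0) hσ) measurableSet_Ioi
    fun x hx => ?_
  have hx0 : 0 < x := hx₀.trans hx
  have hsplit : x ^ (-η) = x ^ (1 - η) * x⁻¹ := by
    rw [← rpow_neg_one, ← rpow_add hx0]
    ring_nf
  rw [hsplit, mul_assoc]
  exact mul_le_mul_of_nonneg_right (rpow_le_rpow hx₀.le (le_of_lt hx) (by linarith))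
    (by positivity)

lemma mul_rpow_le_ldC (hσ : 0 < σ) (hη0 : 0 ≤ η) (hη1 : η < 1) (hx₀ : 0 < x₀) :
    σ ^ (1 - η) / Gamma (1 - η) * x₀ ^ (1 - η) ≤ ldC σ η x₀ := by
  have hB : 0 < ∫ x in Ioi x₀, x⁻¹ * exp (-σ * x) :=
    setIntegral_Ioi_pos (integrableOn_inv_mul_exp_neg_Ioi hσ hx₀) fun x hx =>
      mul_pos (inv_pos.mpr (hx₀.trans hx)) (exp_pos _)
  rw [ldC, le_div_iff₀ hB, mul_assoc]
  exact mul_le_mul_of_nonneg_left (rpow_mul_integral_inv_le hσ hη0 hη1.le hx₀)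
    (div_pos (rpow_pos_of_pos hσ _) (Gamma_pos_of_pos (by linarith))).le

lemma ldC_pos (hσ : 0 < σ) (hη0 : 0 ≤ η) (hη1 : η < 1) (hx₀ : 0 < x₀) : 0 < ldC σ η x₀ :=
  lt_of_lt_of_le (by have := Gamma_pos_of_pos (sub_pos.mpr hη1); positivity)
    (mul_rpow_le_ldC hσ hη0 hη1 hx₀)

/-- The Radon–Nikodym derivative `dP₁/dP₂`. -/
def ldRatio (σ η x₀ x : ℝ) : ℝ :=
  if x ≤ x₀ then 1 else σ ^ (1 - η) / Gamma (1 - η) / ldC σ η x₀ * x ^ (1 - η)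

lemma ldRatio_of_le {x : ℝ} (hx : x ≤ x₀) : ldRatio σ η x₀ x = 1 := if_pos hx

lemma ldRatio_of_lt {x : ℝ} (hx : x₀ < x) :
    ldRatio σ η x₀ x = σ ^ (1 - η) / Gamma (1 - η) / ldC σ η x₀ * x ^ (1 - η) :=
  if_neg (not_le.mpr hx)

lemma measurable_ldRatio (σ η x₀ : ℝ) : Measurable (ldRatio σ η x₀) :=
  Measurable.ite measurableSet_Iic measurable_const (by fun_prop)

instance (σ η x₀ : ℝ) : SigmaFinite (ldP2 σ η x₀) :=
  SigmaFinite.withDensity_of_ne_top (ae_of_all _ fun x => by split_ifs <;> simp)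

section

variable (hσ : 0 < σ) (hη0 : 0 ≤ η) (hη1 : η < 1) (hx₀ : 0 < x₀)
include hσ hη0 hη1 hx₀

lemma ldRatio_pos (x : ℝ) : 0 < ldRatio σ η x₀ x := by
  rcases le_or_gt x x₀ with hx | hx
  · rw [ldRatio_of_le hx]
    exact one_pos
  · have := Gamma_pos_of_pos (sub_pos.mpr hη1)
    have := ldC_pos hσ hη0 hη1 hx₀
    have := hx₀.trans hx
    rw [ldRatio_of_lt hx]
    positivity

lemma ldP1_eq_withDensity :
    ldP1 σ η = (ldP2 σ η x₀).withDensity fun x => ENNReal.ofReal (ldRatio σ η x₀ x) := by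
  have hC := ldC_pos hσ hη0 hη1 hx₀
  rw [ldP1, gammaMeasure, ldP2, ← withDensity_mul _
    (Measurable.ite measurableSet_Iio measurable_const
      (Measurable.ite measurableSet_Iic (by fun_prop) (by fun_prop)))
    (measurable_ldRatio σ η x₀).ennreal_ofReal]
  congr 1
  funext x
  simp only [Pi.mul_apply, gammaPDF, gammaPDFReal]
  rcases lt_or_ge x 0 with hx0 | hx0
  · simp [hx0, not_le.mpr hx0]
  rcases le_or_gt x x₀ with hx | hx
  · simp [hx0, not_lt.mpr hx0, hx, ldRatio_of_le hx, neg_mul]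
  · have hxpos : 0 < x := hx₀.trans hx
    rw [if_pos hx0, if_neg (not_lt.mpr hx0), if_neg (not_le.mpr hx), ldRatio_of_lt hx,
      ← ENNReal.ofReal_mul (by positivity)]
    congr 1
    have hsplit : x ^ (1 - η - 1) = x⁻¹ * x ^ (1 - η) := by
      rw [← rpow_neg_one, ← rpow_add hxpos]
      ring_nf
    rw [hsplit]
    field_simp

lemma ldRatio_le_div_rpow {x : ℝ} (hx : x₀ < x) : ldRatio σ η x₀ x ≤ (x / x₀) ^ (1 - η) := by
  have hC := ldC_pos hσ hη0 hη1 hx₀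
  have hx₀t : 0 < x₀ ^ (1 - η) := rpow_pos_of_pos hx₀ _
  rw [ldRatio_of_lt hx, div_rpow (hx₀.trans hx).le hx₀.le, div_eq_inv_mul (x ^ _)]
  refine mul_le_mul_of_nonneg_right ?_ (rpow_nonneg (hx₀.trans hx).le _)
  rw [div_le_iff₀ hC, ← div_eq_inv_mul, le_div_iff₀ hx₀t]
  exact mul_rpow_le_ldC hσ hη0 hη1 hx₀

lemma mul_rpow_le_ldRatio {x : ℝ} (hx : x₀ < x) :
    σ ^ (1 - η) / Gamma (1 - η) / ldC σ η x₀ * x₀ ^ (1 - η) ≤ ldRatio σ η x₀ x := by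
  have := Gamma_pos_of_pos (sub_pos.mpr hη1)
  have := ldC_pos hσ hη0 hη1 hx₀
  rw [ldRatio_of_lt hx]
  gcongr

lemma gammaPDFReal_mul_log_ldRatio_le {x : ℝ} (hx : x₀ < x) :
    gammaPDFReal (1 - η) σ x * log (ldRatio σ η x₀ x) ≤
      (1 - η) * σ ^ 2 / (Gamma (1 - η) * (σ * x₀) ^ (1 + η)) * ((x - x₀) * exp (-σ * x)) := by
  have hx0 : 0 < x := hx₀.trans hx
  have hΓ := Gamma_pos_of_pos (sub_pos.mpr hη1)
  have hlog : log (ldRatio σ η x₀ x) ≤ (1 - η) * ((x - x₀) / x₀) := by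
    calc log (ldRatio σ η x₀ x) ≤ log ((x / x₀) ^ (1 - η)) :=
          log_le_log (ldRatio_pos hσ hη0 hη1 hx₀ x) (ldRatio_le_div_rpow hσ hη0 hη1 hx₀ hx)
      _ = (1 - η) * log (x / x₀) := log_rpow (by positivity) _
      _ ≤ (1 - η) * ((x - x₀) / x₀) := by
          rw [sub_div, div_self hx₀.ne']
          exact mul_le_mul_of_nonneg_left (log_le_sub_one_of_pos (by positivity)) (by linarith)
  have hpdf :
      gammaPDFReal (1 - η) σ x ≤ σ ^ (1 - η) / Gamma (1 - η) * x₀ ^ (-η) * exp (-σ * x) := by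
    rw [gammaPDFReal, if_pos hx0.le, sub_sub_cancel_left, neg_mul]
    exact mul_le_mul_of_nonneg_right (mul_le_mul_of_nonneg_left
      (rpow_le_rpow_of_nonpos hx₀ hx.le (neg_nonpos.mpr hη0)) (by positivity)) (exp_pos _).le
  have hpow : σ ^ (1 - η) * x₀ ^ (-η) * (σ * x₀) ^ (1 + η) = σ ^ 2 * x₀ := by
    rw [mul_rpow hσ.le hx₀.le, mul_mul_mul_comm, ← rpow_add hσ, ← rpow_add hx₀,
      show 1 - η + (1 + η) = (2 : ℝ) by ring, show -η + (1 + η) = (1 : ℝ) by ring, rpow_two,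
      rpow_one]
  calc gammaPDFReal (1 - η) σ x * log (ldRatio σ η x₀ x)
      ≤ gammaPDFReal (1 - η) σ x * ((1 - η) * ((x - x₀) / x₀)) :=
        mul_le_mul_of_nonneg_left hlog (gammaPDFReal_nonneg (by linarith) hσ x)
    _ ≤ σ ^ (1 - η) / Gamma (1 - η) * x₀ ^ (-η) * exp (-σ * x) * ((1 - η) * ((x - x₀) / x₀)) :=
        mul_le_mul_of_nonneg_right hpdf
          (mul_nonneg (by linarith) (div_nonneg (by linarith) hx₀.le))
    _ = _ := by
        field_simp
        linear_combination (1 - η) * (x - x₀) * hpow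

lemma integrableOn_gammaPDFReal_mul_log_ldRatio :
    IntegrableOn (fun x => gammaPDFReal (1 - η) σ x * log (ldRatio σ η x₀ x)) (Ioi x₀) := by
  have ht : 0 < 1 - η := sub_pos.mpr hη1
  refine integrable_of_le_of_le
    (g₁ := fun x => gammaPDFReal (1 - η) σ x *
      log (σ ^ (1 - η) / Gamma (1 - η) / ldC σ η x₀ * x₀ ^ (1 - η)))
    (((measurable_gammaPDFReal _ _).mul (measurable_ldRatio σ η x₀).log).aestronglyMeasurable)
    (ae_restrict_of_forall_mem measurableSet_Ioi fun x hx => ?_)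
    (ae_restrict_of_forall_mem measurableSet_Ioi fun x hx =>
      gammaPDFReal_mul_log_ldRatio_le hσ hη0 hη1 hx₀ hx)
    ((integrable_gammaPDFReal ht hσ).integrableOn.mul_const _)
    ((integrableOn_sub_mul_exp_neg_Ioi x₀ hσ).const_mul _)
  have := Gamma_pos_of_pos ht
  have := ldC_pos hσ hη0 hη1 hx₀
  exact mul_le_mul_of_nonneg_left
    (log_le_log (by positivity) (mul_rpow_le_ldRatio hσ hη0 hη1 hx₀ hx))
    (gammaPDFReal_nonneg ht hσ x)

lemma integrable_log_ldRatio : Integrable (fun x => log (ldRatio σ η x₀ x)) (ldP1 σ η) := by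
  rw [ldP1, integrable_gammaMeasure_iff (sub_pos.mpr hη1) hσ,
    ← integrableOn_iff_integrable_of_support_subset]
  · exact integrableOn_gammaPDFReal_mul_log_ldRatio hσ hη0 hη1 hx₀
  · intro x hx
    by_contra hle
    exact hx (by simp only [ldRatio_of_le (not_lt.mp hle), log_one, mul_zero])

lemma integral_log_ldRatio_le :
    ∫ x, log (ldRatio σ η x₀ x) ∂ldP1 σ η ≤
      (1 - η) * exp (-σ * x₀) / (Gamma (1 - η) * (σ * x₀) ^ (1 + η)) := by
  rw [ldP1, integral_gammaMeasure (sub_pos.mpr hη1) hσ,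
    ← setIntegral_eq_integral_of_forall_compl_eq_zero (s := Ioi x₀) fun x hx => by
      rw [ldRatio_of_le (not_lt.mp hx), log_one, mul_zero]]
  calc _ ≤ ∫ x in Ioi x₀, (1 - η) * σ ^ 2 / (Gamma (1 - η) * (σ * x₀) ^ (1 + η)) *
        ((x - x₀) * exp (-σ * x)) :=
        setIntegral_mono_on (integrableOn_gammaPDFReal_mul_log_ldRatio hσ hη0 hη1 hx₀)
          ((integrableOn_sub_mul_exp_neg_Ioi x₀ hσ).const_mul _) measurableSet_Ioi
          fun x hx => gammaPDFReal_mul_log_ldRatio_le hσ hη0 hη1 hx₀ hx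
    _ = _ := by
        rw [integral_const_mul, integral_sub_mul_exp_neg_Ioi x₀ hσ]
        field_simp

lemma klDiv_ldP1_ldP2_le :
    klDiv (ldP1 σ η) (ldP2 σ η x₀) ≤
      (((1 - η) * exp (-σ * x₀) / (Gamma (1 - η) * (σ * x₀) ^ (1 + η)) : ℝ) : EReal) := by
  have hP := ldP1_eq_withDensity hσ hη0 hη1 hx₀
  have hint := integrable_log_ldRatio hσ hη0 hη1 hx₀
  rw [hP] at hint ⊢
  rw [klDiv_withDensity_ofReal (measurable_ldRatio σ η x₀)
    (fun x => (ldRatio_pos hσ hη0 hη1 hx₀ x).le) hint, ← hP]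
  exact EReal.coe_le_coe_iff.mpr (integral_log_ldRatio_le hσ hη0 hη1 hx₀)

end

end Construction

theorem ld_kl_bound_general (σ γ x₀ η : ℝ) (hσ : 0 < σ) (hγ : γ ∈ Set.Ioo (1 / 2 : ℝ) 1)
    (hx₀1 : 1 < x₀) (hσx₀ : 2 / (1 - γ) ≤ σ * x₀) (hη : η = 1 - γ - 1 / (σ * x₀)) :
    klDiv (ldP1 σ η) (ldP2 σ η x₀) ≤ ((Real.exp (-σ * x₀) : ℝ) : EReal) := by
  obtain ⟨hγ₀, hγ₁⟩ := hγ
  have hx₀ : 0 < x₀ := by linarith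
  have hσx₀γ : 2 ≤ σ * x₀ * (1 - γ) := (div_le_iff₀ (by linarith)).mp hσx₀
  have hinv : 1 / (σ * x₀) ≤ (1 - γ) / 2 := by
    rw [div_le_div_iff₀ (by positivity) two_pos]
    linarith
  have hη0 : 0 ≤ η := by rw [hη]; linarith
  have hη1 : η < 1 := by rw [hη]; linarith [one_div_pos.mpr (mul_pos hσ hx₀)]
  have he : exp 1 ≤ σ * x₀ := by nlinarith [exp_one_lt_d9]
  refine (klDiv_ldP1_ldP2_le hσ hη0 hη1 hx₀).trans (EReal.coe_le_coe_iff.mpr ?_)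
  have := Gamma_pos_of_pos (sub_pos.mpr hη1)
  rw [div_le_iff₀ (by positivity), mul_comm]
  refine mul_le_mul_of_nonneg_left (le_Gamma_mul_rpow ?_ ?_ he ?_) (exp_pos _).le <;> linarith

/-- In the large-deviations construction, if
`x₀ ≥ log(3 max{1, σ⁻²})/((1−γ)/2)` and `x₀ ≥ 1 + 1/σ`, then
`D_KL(P₁‖P₂) ≤ e^{−σ x₀}`. -/
theorem ld_kl_bound (σ γ x₀ η : ℝ) (hσ : 0 < σ) (hγ : γ ∈ Set.Ioo (1 / 2 : ℝ) 1)
    (hx₀1 : 1 < x₀) (hσx₀ : 2 / (1 - γ) ≤ σ * x₀) (hη : η = 1 - γ - 1 / (σ * x₀))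
    (hx₀a : Real.log (3 * max 1 (σ⁻¹ ^ 2)) / ((1 - γ) / 2) ≤ x₀)
    (hx₀b : 1 + 1 / σ ≤ x₀) :
    klDiv (ldP1 σ η) (ldP2 σ η x₀) ≤ ((Real.exp (-σ * x₀) : ℝ) : EReal) :=
  ld_kl_bound_general σ γ x₀ η hσ hγ hx₀1 hσx₀ hη

end Stab
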